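/- Every bounded cochain complex of locally finite B-modules all of whose cohomology modules are finite-dimensional over k is isomorphic, in the derived category of the abelian category of locally finite B-modules, to a bounded complex of finite-dimensional B-modules. -/

import Mathlib

/-!
`k` is a field, `B` an associative unital `k`-algebra.  A `B`-module is
*finite-dimensional* if its underlying `k`-vector space is so, and *locally finite* if
it is the union of its finite-dimensional `B`-submodules.  The abelian category of
locally finite `B`-modules is formalized as any abelian category `𝒜` together with a
fully faithful exact (additive) functor `ι : 𝒜 ⥤ ModuleCat B` whose essential image
consists exactly of the locally finite `B`-modules.  Isomorphism in the derived
category of `𝒜` is expressed via the localization functor `DerivedCategory.Q`.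
-/

universe w v u

open CategoryTheory

variable (k : Type) [Field k] {B : Type} [Ring B] [Algebra k B]

/-- A `B`-module is finite-dimensional if the underlying `k`-vector space is. -/
def IsFinDimOver (M : ModuleCat.{0} B) : Prop :=
  FiniteDimensional k ((ModuleCat.restrictScalars (algebraMap k B)).obj M)

/-- A `B`-module is locally finite if every element lies in a `B`-submodule that is
finite-dimensional over `k`. -/
def IsLocFinOver (M : ModuleCat.{0} B) : Prop :=
  ∀ x : M, ∃ N : Submodule B M, x ∈ N ∧ IsFinDimOver k (ModuleCat.of B ↥N)

/-!
Restricted along `ι`, the complex becomes a bounded complex `M` of locally finite `B`-modules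
with finitely generated cohomology. Going down from the top degree, choose finite-dimensional
submodules `N i ⊆ M i` with `d (N i) ⊆ N (i + 1)` such that every `x` with `d x ∈ N (i + 1)` lies
in `N i + d (M (i - 1))`: it suffices that `N i` contains lifts of generators of `H^i` and
preimages of generators of `N (i + 1) ∩ im d`, and by local finiteness such lifts lie in a
finite-dimensional submodule. The condition says that `M / N` is acyclic, so `N ⊆ M` is a
quasi-isomorphism, and `N` lifts along the fully faithful `ι` because finite-dimensional modules
are locally finite.
-/

section LocallyFinite

variable {k B M N : Type*} [Field k] [Ring B] [Algebra k B]
  [AddCommGroup M] [Module k M] [Module B M] [IsScalarTower k B M]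
  [AddCommGroup N] [Module B N]

namespace Submodule

-- `p.restrictScalars k` and `p` carry the same `k`-module structure.
instance finiteDimensional_restrictScalars_of_isScalarTower (p : Submodule B M)
    [FiniteDimensional k p] : FiniteDimensional k (p.restrictScalars k) :=
  ‹_›

instance finiteDimensional_of_isScalarTower [FiniteDimensional k M] (p : Submodule B M) :
    FiniteDimensional k p :=
  FiniteDimensional.finiteDimensional_submodule (p.restrictScalars k)

theorem finiteDimensional_of_le_of_isScalarTower {p q : Submodule B M} [FiniteDimensional k q]
    (h : p ≤ q) : FiniteDimensional k p :=
  finiteDimensional_of_le (S₁ := p.restrictScalars k) (S₂ := q.restrictScalars k) h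

instance finiteDimensional_sup_of_isScalarTower (p q : Submodule B M) [FiniteDimensional k p]
    [FiniteDimensional k q] : FiniteDimensional k ↥(p ⊔ q) := by
  have := finiteDimensional_sup (p.restrictScalars k) (q.restrictScalars k)
  rwa [← restrictScalars_sup] at this

instance finiteDimensional_iSup_of_isScalarTower {ι : Type*} [Finite ι] (p : ι → Submodule B M)
    [∀ i, FiniteDimensional k (p i)] : FiniteDimensional k ↥(⨆ i, p i) := by
  have := finiteDimensional_iSup fun i => (p i).restrictScalars k
  rwa [← restrictScalars_iSup] at this

theorem fg_of_finiteDimensional (p : Submodule B M) [FiniteDimensional k p] : p.FG :=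
  Module.Finite.iff_fg.mp (Module.Finite.of_restrictScalars_finite k B p)

theorem exists_finiteDimensional_le_of_fg_le_map
    (hM : ∀ x : M, ∃ P : Submodule B M, x ∈ P ∧ FiniteDimensional k P)
    (f : M →ₗ[B] N) {s : Submodule B M} {q : Submodule B N} (hq : q.FG) (hqs : q ≤ s.map f) :
    ∃ P ≤ s, FiniteDimensional k P ∧ q ≤ P.map f := by
  obtain ⟨G, rfl⟩ := hq
  choose x hxs hx using fun y : G => hqs (subset_span y.2)
  choose P hxP hP using fun y => hM (x y)
  have (y : G) : FiniteDimensional k ↥(P y ⊓ s) :=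
    finiteDimensional_of_le_of_isScalarTower inf_le_left
  refine ⟨⨆ y, P y ⊓ s, iSup_le fun _ => inf_le_right, inferInstance, span_le.mpr ?_⟩
  intro y hy
  exact ⟨x ⟨y, hy⟩, mem_iSup_of_mem ⟨y, hy⟩ ⟨hxP _, hxs _⟩, hx _⟩

end Submodule

open LinearMap Submodule in
theorem exists_finiteDimensional_le_comap_and_comap_le_sup_range
    {M' M'' : Type*} [AddCommGroup M'] [Module B M']
    [AddCommGroup M''] [Module k M''] [Module B M''] [IsScalarTower k B M'']
    (hM : ∀ x : M, ∃ P : Submodule B M, x ∈ P ∧ FiniteDimensional k P)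
    (f : M' →ₗ[B] M) (g : M →ₗ[B] M'') (hH : ((ker g).map (range f).mkQ).FG)
    (K : Submodule B M'') [FiniteDimensional k K] :
    ∃ L : Submodule B M, FiniteDimensional k L ∧ L ≤ K.comap g ∧ K.comap g ≤ L ⊔ range f := by
  obtain ⟨S, hS, hSfd, hSH⟩ := exists_finiteDimensional_le_of_fg_le_map hM (range f).mkQ hH le_rfl
  have : FiniteDimensional k ↥(K ⊓ range g) := finiteDimensional_of_le_of_isScalarTower inf_le_left
  obtain ⟨T, hT, hTfd, hTK⟩ := exists_finiteDimensional_le_of_fg_le_map hM g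
    (s := K.comap g) (fg_of_finiteDimensional (k := k) _) (by rw [map_comap_eq, inf_comm])
  refine ⟨S ⊔ T, inferInstance, sup_le (hS.trans (ker_le_comap g)) hT, fun x hx => ?_⟩
  obtain ⟨t, htT, hgt⟩ := hTK ⟨hx, mem_range_self g x⟩
  have hker : x - t ∈ S ⊔ range f := by
    rw [sup_comm, ← comap_map_mkQ]
    exact hSH (mem_map_of_mem (by simp [hgt]))
  rw [← sub_add_cancel x t]
  exact add_mem (sup_le_sup_right (le_sup_left (b := T)) (range f) hker)
    (mem_sup_left (mem_sup_right htT))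

end LocallyFinite

section FinDimOver

open scoped ModuleCat

variable {k}

theorem isLocFinOver_of_isFinDimOver {M : ModuleCat.{0} B} (h : IsFinDimOver k M) :
    IsLocFinOver k M :=
  have : FiniteDimensional k M := h
  fun _ => ⟨⊤, trivial, Submodule.finiteDimensional_of_isScalarTower (k := k) ⊤⟩

theorem IsFinDimOver.of_iso {M M' : ModuleCat.{0} B} (e : M ≅ M') (h : IsFinDimOver k M) :
    IsFinDimOver k M' :=
  have : FiniteDimensional k M := h
  LinearEquiv.finiteDimensional (e.toLinearEquiv.restrictScalars k)

theorem IsFinDimOver.finite {M : ModuleCat.{0} B} (h : IsFinDimOver k M) : Module.Finite B M :=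
  have : FiniteDimensional k M := h
  Module.Finite.of_restrictScalars_finite k B M

end FinDimOver

namespace CategoryTheory.ShortComplex

theorem fg_map_mkQ_ker_of_finite_homology {R : Type*} [Ring R]
    (S : ShortComplex (ModuleCat.{v} R)) [Module.Finite R S.homology] :
    ((LinearMap.ker S.g.hom).map (LinearMap.range S.f.hom).mkQ).FG := by
  have : Module.Finite R (LinearMap.ker S.g.hom ⧸ LinearMap.range S.moduleCatToCycles) :=
    Module.Finite.equiv S.moduleCatHomologyIso.toLinearEquiv
  let φ := (LinearMap.range S.moduleCatToCycles).liftQ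
    ((LinearMap.range S.f.hom).mkQ ∘ₗ (LinearMap.ker S.g.hom).subtype) (by
      rintro _ ⟨x, rfl⟩
      exact (Submodule.Quotient.mk_eq_zero _).mpr ⟨x, rfl⟩)
  have hφ : LinearMap.range φ = (LinearMap.ker S.g.hom).map (LinearMap.range S.f.hom).mkQ := by
    rw [← LinearMap.range_comp_of_range_eq_top φ (Submodule.range_mkQ _), Submodule.liftQ_mkQ,
      LinearMap.range_comp, Submodule.range_subtype]
  exact hφ ▸ Submodule.fg_range φ

end CategoryTheory.ShortComplex

namespace CategoryTheory.ShortComplex.ShortExact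

variable {C ι : Type*} [Category C] [Abelian C] {c : ComplexShape ι}
  {S : ShortComplex (HomologicalComplex C c)}

theorem quasiIso_f (hS : S.ShortExact) (h : S.X₃.Acyclic) : _root_.QuasiIso S.f := by
  refine ⟨fun j => ?_⟩
  rw [quasiIsoAt_iff_isIso_homologyMap]
  have : Epi (HomologicalComplex.homologyMap S.f j) :=
    (hS.homology_exact₂ j).epi_f ((h j).isZero_homology.eq_of_tgt _ _)
  have : Mono (HomologicalComplex.homologyMap S.f j) := by
    by_cases hj : ∃ i, c.Rel i j
    · obtain ⟨i, hij⟩ := hj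
      exact (hS.homology_exact₁ i j hij).mono_g ((h i).isZero_homology.eq_of_src _ _)
    · have := hS.mono_f
      exact HomologicalComplex.mono_homologyMap_of_mono_of_not_rel S.f j (by simpa using hj)
  exact isIso_of_mono_of_epi _

end CategoryTheory.ShortComplex.ShortExact

namespace HomologicalComplex

variable {R : Type*} [Ring R] {ι : Type*} {c : ComplexShape ι}
  (K : HomologicalComplex (ModuleCat.{v} R) c) (N : ∀ i, Submodule R (K.X i))
  (hN : ∀ i j, N i ≤ (N j).comap (K.d i j).hom)

def subcomplex : HomologicalComplex (ModuleCat.{v} R) c where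
  X i := ModuleCat.of R (N i)
  d i j := ModuleCat.ofHom ((K.d i j).hom.restrict (hN i j))
  shape i j hij := by ext x; simp [K.shape i j hij]
  d_comp_d' i j l _ _ := by ext x; simp [← ModuleCat.comp_apply]

def quotient : HomologicalComplex (ModuleCat.{v} R) c where
  X i := ModuleCat.of R (K.X i ⧸ N i)
  d i j := ModuleCat.ofHom ((N i).mapQ (N j) (K.d i j).hom (hN i j))
  shape i j hij := by ext x; simp [K.shape i j hij]
  d_comp_d' i j l _ _ := by ext x; simp [← ModuleCat.comp_apply]

def subcomplexι : K.subcomplex N hN ⟶ K where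
  f i := ModuleCat.ofHom (N i).subtype

def toQuotient : K ⟶ K.quotient N hN where
  f i := ModuleCat.ofHom (N i).mkQ

theorem shortExact_subcomplexι_toQuotient :
    (ShortComplex.mk (K.subcomplexι N hN) (K.toQuotient N hN)
      (by ext i x; exact (Submodule.Quotient.mk_eq_zero _).mpr x.2)).ShortExact :=
  shortExact_of_degreewise_shortExact _ fun i =>
    ModuleCat.shortComplex_shortExact _ (LinearMap.exact_subtype_mkQ (N i))
      (N i).injective_subtype (N i).mkQ_surjective

theorem exactAt_quotient {i j l : ι} (hi : c.prev j = i) (hl : c.next j = l)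
    (h : (N l).comap (K.d j l).hom ≤ N j ⊔ LinearMap.range (K.d i j).hom) :
    (K.quotient N hN).ExactAt j := by
  rw [exactAt_iff' _ i j l hi hl, ShortComplex.moduleCat_exact_iff]
  intro x₂ hx₂
  obtain ⟨x, rfl⟩ := Submodule.Quotient.mk_surjective _ x₂
  have hx : K.d j l x ∈ N l := (Submodule.Quotient.mk_eq_zero _).mp hx₂
  obtain ⟨n, hn, _, ⟨y, rfl⟩, rfl⟩ := Submodule.mem_sup.mp (h hx)
  refine ⟨Submodule.Quotient.mk y, (Submodule.Quotient.eq _).mpr ?_⟩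
  simpa using neg_mem hn

theorem quasiIso_subcomplexι
    (h : ∀ j, (N (c.next j)).comap (K.d j (c.next j)).hom ≤
      N j ⊔ LinearMap.range (K.d (c.prev j) j).hom) :
    QuasiIso (K.subcomplexι N hN) :=
  (K.shortExact_subcomplexι_toQuotient N hN).quasiIso_f fun j =>
    K.exactAt_quotient N hN rfl rfl (h j)

end HomologicalComplex

def Int.decreasingRec {X : ℤ → Sort*} (b : ℤ) (init : ∀ i, X i) (step : ∀ i, X (i + 1) → X i)
    (i : ℤ) : X i :=
  if b < i then init i else step i (Int.decreasingRec b init step (i + 1))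
termination_by (b + 1 - i).toNat
decreasing_by omega

theorem Int.decreasingRec_of_lt {X : ℤ → Sort*} {b : ℤ} (init : ∀ i, X i)
    (step : ∀ i, X (i + 1) → X i) {i : ℤ} (h : b < i) :
    Int.decreasingRec b init step i = init i := by
  rw [Int.decreasingRec, if_pos h]

theorem Int.decreasingRec_of_le {X : ℤ → Sort*} {b : ℤ} (init : ∀ i, X i)
    (step : ∀ i, X (i + 1) → X i) {i : ℤ} (h : i ≤ b) :
    Int.decreasingRec b init step i = step i (Int.decreasingRec b init step (i + 1)) := by
  rw [Int.decreasingRec, if_neg (not_lt.mpr h)]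

section FiniteDimensionalSubcomplex

open scoped ModuleCat

variable {k}

theorem CochainComplex.exists_finiteDimensional_subcomplex_quasiIso
    (K : CochainComplex (ModuleCat.{0} B) ℤ) (b : ℤ) (hb : ∀ i, b < i → Limits.IsZero (K.X i))
    (hloc : ∀ i, IsLocFinOver k (K.X i)) (hH : ∀ i, Module.Finite B (K.homology i)) :
    ∃ (N : ∀ i, Submodule B (K.X i)) (hN : ∀ i j, N i ≤ (N j).comap (K.d i j).hom),
      (∀ i, FiniteDimensional k (N i)) ∧ QuasiIso (K.subcomplexι N hN) := by
  have hstep (i : ℤ) (L : {L : Submodule B (K.X (i + 1)) // FiniteDimensional k L}) :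
      ∃ L' : {L' : Submodule B (K.X i) // FiniteDimensional k L'},
        L'.1 ≤ L.1.comap (K.d i (i + 1)).hom ∧
        L.1.comap (K.d i (i + 1)).hom ≤ L'.1 ⊔ LinearMap.range (K.d (i - 1) i).hom := by
    have : Module.Finite B (K.sc' (i - 1) i (i + 1)).homology :=
      Module.Finite.equiv (K.homologyIsoSc' (i - 1) i (i + 1) (by simp) (by simp)).toLinearEquiv
    have := L.2
    obtain ⟨L', hL', hle, hge⟩ := exists_finiteDimensional_le_comap_and_comap_le_sup_range
      (hloc i) (K.d (i - 1) i).hom (K.d i (i + 1)).hom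
      (K.sc' (i - 1) i (i + 1)).fg_map_mkQ_ker_of_finite_homology L.1
    exact ⟨⟨L', hL'⟩, hle, hge⟩
  choose step hstep_le hstep_ge using hstep
  let F := Int.decreasingRec (X := fun i => {L : Submodule B (K.X i) // FiniteDimensional k L})
    b (fun _ => ⟨⊥, inferInstance⟩) step
  refine ⟨fun i => (F i).1, fun i j => ?_, fun i => (F i).2,
    K.quasiIso_subcomplexι _ _ fun j => ?_⟩
  · by_cases hij : j = i + 1
    · subst hij
      rcases lt_or_ge b i with h | h
      · simp [F, Int.decreasingRec_of_lt _ _ h]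
      · simpa [F, Int.decreasingRec_of_le _ _ h] using hstep_le i _
    · simp [K.shape i j (by simpa [eq_comm] using hij)]
  · rw [CochainComplex.next, CochainComplex.prev]
    rcases lt_or_ge b j with h | h
    · have := ModuleCat.subsingleton_of_isZero (hb j h)
      intro x _
      simp [Subsingleton.elim x 0]
    · simpa [F, Int.decreasingRec_of_le _ _ h] using hstep_ge j _

end FiniteDimensionalSubcomplex

theorem CategoryTheory.Functor.exists_mapHomologicalComplex_obj_iso {C D ι : Type*} [Category C]
    [Category D] [Limits.HasZeroMorphisms C] [Limits.HasZeroMorphisms D] (F : C ⥤ D)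
    [F.PreservesZeroMorphisms] [F.Full] [F.Faithful] {c : ComplexShape ι}
    (K : HomologicalComplex D c) (hK : ∀ i, ∃ X, Nonempty (F.obj X ≅ K.X i)) :
    ∃ L : HomologicalComplex C c, Nonempty ((F.mapHomologicalComplex c).obj L ≅ K) := by
  choose X hX using hK
  obtain ⟨e⟩ : Nonempty (∀ i, F.obj (X i) ≅ K.X i) := ⟨fun i => (hX i).some⟩
  let L : HomologicalComplex C c :=
    { X := X
      d i j := F.preimage ((e i).hom ≫ K.d i j ≫ (e j).inv)
      shape i j hij := F.map_injective (by simp [K.shape i j hij])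
      d_comp_d' i j l _ _ := F.map_injective (by simp) }
  refine ⟨L, ⟨HomologicalComplex.Hom.isoOfComponents e fun i j _ => ?_⟩⟩
  -- `simp` only closes this with the objects written as `F.obj (X i)`.
  exact (by simp [L] : (e i).hom ≫ K.d i j = F.map (L.d i j) ≫ (e j).hom)

/-- Every bounded cochain complex of locally finite `B`-modules all of
whose cohomology modules are finite-dimensional over `k` is isomorphic, in the derived
category of the abelian category of locally finite `B`-modules, to a bounded complex of
finite-dimensional `B`-modules. -/
theorem bounded_locfin_complex_iso_finite_dimensional_complex
    (𝒜 : Type u) [Category.{v} 𝒜] [Abelian 𝒜]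
    (ι : 𝒜 ⥤ ModuleCat.{0} B) [ι.Full] [ι.Faithful] [ι.Additive]
    [Limits.PreservesFiniteLimits ι] [Limits.PreservesFiniteColimits ι]
    (himage : ∀ X : 𝒜, IsLocFinOver k (ι.obj X))
    (hessSurj : ∀ M : ModuleCat.{0} B, IsLocFinOver k M →
      ∃ X : 𝒜, Nonempty (ι.obj X ≅ M))
    [HasDerivedCategory.{w} 𝒜]
    (C : CochainComplex 𝒜 ℤ)
    (hbdd : ∃ a b : ℤ, ∀ i : ℤ, (i < a ∨ b < i) → Limits.IsZero (C.X i))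
    (hfd : ∀ i : ℤ, IsFinDimOver k (ι.obj (C.homology i))) :
    ∃ D : CochainComplex 𝒜 ℤ,
      (∃ a b : ℤ, ∀ i : ℤ, (i < a ∨ b < i) → Limits.IsZero (D.X i)) ∧
      (∀ i : ℤ, IsFinDimOver k (ι.obj (D.X i))) ∧
      Nonempty (DerivedCategory.Q.obj C ≅ DerivedCategory.Q.obj D) := by
  obtain ⟨a, b, hab⟩ := hbdd
  let M := (ι.mapHomologicalComplex (ComplexShape.up ℤ)).obj C
  -- `M.sc i` is `(C.sc i).map ι` by definition.
  have hH (i : ℤ) : Module.Finite B (M.homology i) :=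
    have : Module.Finite B (ι.obj (C.sc i).homology) := (hfd i).finite
    Module.Finite.equiv ((C.sc i).mapHomologyIso ι).symm.toLinearEquiv
  obtain ⟨N, hN, hNfd, hq⟩ :=
    CochainComplex.exists_finiteDimensional_subcomplex_quasiIso (k := k) M b
    (fun i hi => ι.map_isZero (hab i (Or.inr hi))) (fun i => himage (C.X i)) hH
  obtain ⟨D, ⟨e⟩⟩ := ι.exists_mapHomologicalComplex_obj_iso (M.subcomplex N hN)
    fun i => hessSurj _ (isLocFinOver_of_isFinDimOver (hNfd i))
  obtain ⟨φ, hφ⟩ := (ι.mapHomologicalComplex _).map_surjective (e.hom ≫ M.subcomplexι N hN)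
  have : QuasiIso φ := by
    rw [← HomologicalComplex.quasiIso_map_iff_of_preservesHomology φ ι, hφ]
    infer_instance
  refine ⟨D, ⟨a, b, fun i hi => ?_⟩,
    fun i => IsFinDimOver.of_iso ((HomologicalComplex.eval _ _ i).mapIso e).symm (hNfd i),
    ⟨(asIso (DerivedCategory.Q.map φ)).symm⟩⟩
  have : Subsingleton (M.X i) := ModuleCat.subsingleton_of_isZero (ι.map_isZero (hab i hi))
  exact Limits.IsZero.of_full_of_faithful_of_isZero ι _
    ((ModuleCat.isZero_of_iff_subsingleton.mpr inferInstance).of_iso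
      ((HomologicalComplex.eval _ _ i).mapIso e))
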